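/- Let λ > 0, n ≥ 2, r₁ = r(n) > 0, r₂ = r(2n−1) > 0, and suppose a, b ∈ ℂ satisfy r₁|a| + r₂|b| ≤ 1 and |λa² − b| = max{λ/r₁², 1/r₂}, with λ > r₁²/r₂. Then b = 0 and |a| = 1/r₁. -/

import Mathlib

/-! On the triangle `r₁ u + r₂ v ≤ 1` one has `r₁² u² ≤ (1 - r₂ v)² ≤ 1 - r₂ v`, hence
`r₁² (λ u² + v) ≤ λ - v (λ r₂ - r₁²)`. When `λ r₂ > r₁²` the right-hand side is at most `λ`,
with equality only at `v = 0`, which in turn forces `r₁ u = 1`. Applied to `u = ‖a‖`, `v = ‖b‖`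
via `‖λ a² - b‖ ≤ λ ‖a‖² + ‖b‖`, this is the equality case. -/

theorem sq_mul_add_le_of_add_le_one {lam r1 r2 u v : ℝ} (hlam : 0 ≤ lam) (hr1 : 0 ≤ r1)
    (hr2 : 0 ≤ r2) (hu : 0 ≤ u) (hv : 0 ≤ v) (h : r1 * u + r2 * v ≤ 1) :
    r1 ^ 2 * (lam * u ^ 2 + v) + v * (lam * r2 - r1 ^ 2) ≤ lam := by
  have hr1u : 0 ≤ r1 * u := mul_nonneg hr1 hu
  have hr2v : 0 ≤ r2 * v := mul_nonneg hr2 hv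
  have hsq : (r1 * u) ^ 2 ≤ 1 - r2 * v :=
    calc (r1 * u) ^ 2 ≤ (1 - r2 * v) ^ 2 := pow_le_pow_left₀ hr1u (by linarith) 2
      _ ≤ 1 - r2 * v := pow_le_of_le_one (by linarith) (by linarith) two_ne_zero
  nlinarith [mul_le_mul_of_nonneg_left hsq hlam]

theorem eq_zero_and_eq_inv_of_le_sq_mul_add {lam r1 r2 u v : ℝ} (hr1 : 0 < r1) (hr2 : 0 ≤ r2)
    (hu : 0 ≤ u) (hv : 0 ≤ v) (h : r1 * u + r2 * v ≤ 1) (hlam : r1 ^ 2 < lam * r2)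
    (heq : lam ≤ r1 ^ 2 * (lam * u ^ 2 + v)) : v = 0 ∧ u = 1 / r1 := by
  have hlam0 : 0 < lam := pos_of_mul_pos_left ((pow_pos hr1 2).trans hlam) hr2
  have hbound := sq_mul_add_le_of_add_le_one hlam0.le hr1.le hr2 hu hv h
  have hv0 : v = 0 := by nlinarith
  subst hv0
  have hsq : 1 ≤ (r1 * u) ^ 2 := by nlinarith
  have hr1u : r1 * u = 1 := by nlinarith [mul_nonneg hr1.le hu]
  exact ⟨rfl, by field_simp; linarith⟩

theorem Complex.norm_ofReal_mul_sq_sub_le {lam : ℝ} (hlam : 0 ≤ lam) (a b : ℂ) :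
    ‖(lam * a ^ 2 - b : ℂ)‖ ≤ lam * ‖a‖ ^ 2 + ‖b‖ :=
  calc ‖(lam * a ^ 2 - b : ℂ)‖ ≤ ‖(lam * a ^ 2 : ℂ)‖ + ‖b‖ := norm_sub_le _ _
    _ = lam * ‖a‖ ^ 2 + ‖b‖ := by
      rw [norm_mul, norm_pow, Complex.norm_real, Real.norm_of_nonneg hlam]

theorem stmt_16_general (lam : ℝ)
    (r1 r2 : ℝ) (hr1 : 0 < r1) (hr2 : 0 < r2) (a b : ℂ)
    (h1 : r1 * ‖a‖ + r2 * ‖b‖ ≤ 1)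
    (h2 : ‖(lam * a ^ 2 - b : ℂ)‖ = max (lam / r1 ^ 2) (1 / r2))
    (h3 : r1 ^ 2 / r2 < lam) :
    b = 0 ∧ ‖a‖ = 1 / r1 := by
  have hlam : r1 ^ 2 < lam * r2 := (div_lt_iff₀ hr2).mp h3
  have hmax : max (lam / r1 ^ 2) (1 / r2) = lam / r1 ^ 2 :=
    max_eq_left ((div_le_div_iff₀ hr2 (by positivity)).mpr (by linarith))
  have hlam0 : 0 < lam := (div_pos (pow_pos hr1 2) hr2).trans h3
  have hle : lam ≤ r1 ^ 2 * (lam * ‖a‖ ^ 2 + ‖b‖) := by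
    rw [← div_le_iff₀' (by positivity), ← hmax, ← h2]
    exact Complex.norm_ofReal_mul_sq_sub_le hlam0.le a b
  obtain ⟨hb, ha⟩ :=
    eq_zero_and_eq_inv_of_le_sq_mul_add hr1 hr2.le (norm_nonneg a) (norm_nonneg b) h1 hlam hle
  exact ⟨norm_eq_zero.mp hb, ha⟩

theorem stmt_16 (lam : ℝ) (hlam : 0 < lam) (n : ℕ) (hn : 2 ≤ n)
    (r1 r2 : ℝ) (hr1 : 0 < r1) (hr2 : 0 < r2) (a b : ℂ)
    (h1 : r1 * ‖a‖ + r2 * ‖b‖ ≤ 1)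
    (h2 : ‖(lam * a ^ 2 - b : ℂ)‖ = max (lam / r1 ^ 2) (1 / r2))
    (h3 : r1 ^ 2 / r2 < lam) :
    b = 0 ∧ ‖a‖ = 1 / r1 :=
  stmt_16_general lam r1 r2 hr1 hr2 a b h1 h2 h3
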